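/- The nonabelian group of order 21 is not CCA: with G = ⟨a,x | a³ = e, a⁻¹xa = x²⟩ (so x⁷ = e) and b = ax, there is a colour-preserving automorphism of Cay(G; {a^{±1}, b^{±1}}) fixing the identity that is not a group automorphism of G. -/

import Mathlib

/-- A map `φ` is colour-preserving for the Cayley graph `Cay(G;S)` if it sends each
edge `x — xs` (coloured `{s,s⁻¹}`) to an edge of the same colour. -/
def ColourPreserving {G : Type*} [Group G] (S : Set G) (φ : G → G) : Prop :=
  ∀ x : G, ∀ s ∈ S, φ (x * s) = φ x * s ∨ φ (x * s) = φ x * s⁻¹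

/-- A map `φ` is colour-permuting for `Cay(G;S)` if it permutes the edge colours:
there is a permutation `π` of `S` with `π (s⁻¹) = (π s)⁻¹` and
`φ(xs) ∈ {φ(x) π(s)^{±1}}`. -/
def ColourPermuting {G : Type*} [Group G] (S : Set G) (φ : G → G) : Prop :=
  ∃ π : G → G, Set.BijOn π S S ∧ (∀ s ∈ S, π s⁻¹ = (π s)⁻¹) ∧
    ∀ x : G, ∀ s ∈ S, φ (x * s) = φ x * π s ∨ φ (x * s) = φ x * (π s)⁻¹

/-- `φ : G → G` is affine if it is a group automorphism composed with a left translation. -/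
def IsAffineMap {G : Type*} [Group G] (φ : G → G) : Prop :=
  ∃ (α : G ≃* G) (g : G), ∀ x, φ x = α (g * x)

/-- `G` is CCA if every colour-preserving automorphism of every connected Cayley graph
on `G` is affine. -/
def IsCCA (G : Type*) [Group G] : Prop :=
  ∀ S : Set G, S⁻¹ = S → Subgroup.closure S = ⊤ →
    ∀ φ : Equiv.Perm G, ColourPreserving S ⇑φ → IsAffineMap ⇑φ

/-- `G` is strongly CCA if every colour-permuting automorphism of every connected
Cayley graph on `G` is affine. -/
def IsStronglyCCA (G : Type*) [Group G] : Prop :=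
  ∀ S : Set G, S⁻¹ = S → Subgroup.closure S = ⊤ →
    ∀ φ : Equiv.Perm G, ColourPermuting S ⇑φ → IsAffineMap ⇑φ

/-!
In `Cay(G; {a^±1, b^±1})` every vertex lies on exactly one `a`-triangle `g⟨a⟩` and one
`b`-triangle `g⟨b⟩`, and triangles are complete graphs, so a permutation of `G` is
colour-preserving as soon as it maps `a`-triangles to `a`-triangles and `b`-triangles to
`b`-triangles. The seven triangles of each colour, with incidence given by a shared vertex,
form a Fano plane; the stabiliser of a flag in its collineation group has order 8, and only
its identity element is a group automorphism of `G`. One of the other seven is written down on a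
concrete model of `ℤ₇ ⋊ ℤ₃`, checked there by computation, and transported to `G` along the
isomorphism that the presentation forces.
-/

section CayleyGraph

variable {G H : Type*} [Group G] [Group H]

def PreservesColour (s : G) (φ : G → G) : Prop :=
  ∀ x, φ (x * s) = φ x * s ∨ φ (x * s) = φ x * s⁻¹

instance [Fintype G] [DecidableEq G] (s : G) (φ : G → G) : Decidable (PreservesColour s φ) :=
  by unfold PreservesColour; infer_instance

theorem PreservesColour.inv {s : G} {φ : G → G} (h : PreservesColour s φ) :
    PreservesColour s⁻¹ φ := by
  intro y
  rcases h (y * s⁻¹) with h | h <;> rw [inv_mul_cancel_right] at h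
  · exact Or.inl (eq_mul_inv_of_mul_eq h.symm)
  · exact Or.inr (by rw [inv_inv]; exact eq_mul_of_mul_inv_eq h.symm)

theorem colourPreserving_pair {s t : G} {φ : G → G} (hs : PreservesColour s φ)
    (ht : PreservesColour t φ) : ColourPreserving {s, s⁻¹, t, t⁻¹} φ := by
  rintro x _ (rfl | rfl | rfl | rfl)
  exacts [hs x, hs.inv x, ht x, ht.inv x]

theorem inv_pair_eq (s t : G) : ({s, s⁻¹, t, t⁻¹} : Set G)⁻¹ = {s, s⁻¹, t, t⁻¹} := by
  simp only [Set.inv_insert, Set.inv_singleton, inv_inv]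
  rw [Set.insert_comm, Set.pair_comm]

theorem closure_pair_le_closure_mul (a x : G) :
    Subgroup.closure {a, x} ≤ Subgroup.closure {a, a⁻¹, a * x, (a * x)⁻¹} := by
  have hmem : ∀ y ∈ ({a, a⁻¹, a * x, (a * x)⁻¹} : Set G),
      y ∈ Subgroup.closure {a, a⁻¹, a * x, (a * x)⁻¹} := fun _ h => Subgroup.subset_closure h
  rw [Subgroup.closure_le, Set.insert_subset_iff, Set.singleton_subset_iff]
  refine ⟨hmem a (by simp), ?_⟩
  simpa using mul_mem (hmem a⁻¹ (by simp)) (hmem (a * x) (by simp))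

theorem PreservesColour.permCongr {s : H} {ψ : Equiv.Perm H} (h : PreservesColour s ψ)
    (e : H ≃* G) : PreservesColour (e s) (e.toEquiv.permCongr ψ) := by
  intro y
  simp only [Equiv.permCongr_apply, MulEquiv.toEquiv_eq_coe, MulEquiv.coe_toEquiv,
    MulEquiv.coe_toEquiv_symm, map_mul, MulEquiv.symm_apply_apply]
  rcases h (e.symm y) with h | h <;> rw [h, map_mul]
  · exact Or.inl rfl
  · exact Or.inr (by rw [map_inv])

theorem map_mul_of_permCongr_eq (e : H ≃* G) {ψ : Equiv.Perm H} {α : G ≃* G}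
    (h : ⇑(e.toEquiv.permCongr ψ) = ⇑α) (u v : H) : ψ (u * v) = ψ u * ψ v := by
  have hψ : ∀ w, ψ w = e.symm (α (e w)) := fun w => by
    rw [← h]; simp
  rw [hψ, hψ, hψ, map_mul, map_mul, map_mul]

theorem not_isCCA_of_colourPreserving {S : Set G} (hS : S⁻¹ = S)
    (hgen : Subgroup.closure S = ⊤) (φ : Equiv.Perm G) (hφ : ColourPreserving S φ)
    (h1 : φ 1 = 1) (hnot : ¬ ∃ α : G ≃* G, ⇑φ = ⇑α) : ¬ IsCCA G := by
  intro hcca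
  obtain ⟨α, g, hαg⟩ := hcca S hS hgen φ hφ
  have hg : α g = α 1 := by rw [← mul_one g, ← hαg, h1, map_one]
  exact hnot ⟨α, funext fun y => by rw [hαg, α.injective hg, one_mul]⟩

end CayleyGraph

theorem pow_mul_pow_eq_of_mul_eq {M : Type*} [Monoid M] {a x : M} {k : ℕ}
    (h : x * a = a * x ^ k) (m j : ℕ) : x ^ m * a ^ j = a ^ j * x ^ (k ^ j * m) := by
  have step : ∀ n, x ^ n * a = a * x ^ (k * n) := fun n => by
    rw [pow_mul]; exact ((SemiconjBy.pow_right h.symm n).eq).symm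
  induction j with
  | zero => simp
  | succ j ih =>
    rw [pow_succ, ← mul_assoc, ih, mul_assoc, step, pow_succ', mul_assoc, ← mul_assoc k,
      ← pow_succ']

theorem pow_seven_eq_one_of_mul_eq {G : Type*} [Group G] {a x : G} (ha : a ^ 3 = 1)
    (hxa : x * a = a * x ^ 2) : x ^ 7 = 1 := by
  have h := pow_mul_pow_eq_of_mul_eq hxa 1 3
  rw [ha, mul_one, one_mul, pow_one] at h
  exact mul_eq_right.1 (by rw [← pow_succ]; exact h.symm)

theorem pow_zmod_val {G : Type*} [Group G] {x : G} {n : ℕ} [NeZero n] (hx : x ^ n = 1)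
    (k : ℕ) : x ^ (k : ZMod n).val = x ^ k := by
  rw [ZMod.val_natCast, ← pow_eq_pow_mod k hx]

/-- `⟨i, j⟩` stands for `a ^ j * x ^ i`; the relation `x * a = a * x ^ 2` gives the product. -/
@[ext]
structure Frob21 where
  i : ZMod 7
  j : ZMod 3
deriving DecidableEq, Fintype

namespace Frob21

def twoPow (j : ZMod 3) : ZMod 7 := 2 ^ j.val

theorem twoPow_add : ∀ j k : ZMod 3, twoPow (j + k) = twoPow j * twoPow k := by decide

theorem twoPow_neg_mul_self : ∀ j : ZMod 3, twoPow (-j) * twoPow j = 1 := by decide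

instance : Group Frob21 where
  mul u v := ⟨twoPow v.j * u.i + v.i, u.j + v.j⟩
  one := ⟨0, 0⟩
  inv u := ⟨-(twoPow (-u.j) * u.i), -u.j⟩
  mul_assoc u v w := by
    ext
    · change twoPow w.j * (twoPow v.j * u.i + v.i) + w.i
        = twoPow (v.j + w.j) * u.i + (twoPow w.j * v.i + w.i)
      rw [twoPow_add]; ring
    · exact add_assoc _ _ _
  one_mul u := by
    ext
    · change twoPow u.j * 0 + u.i = u.i
      simp
    · exact zero_add _
  mul_one u := by
    ext
    · change twoPow 0 * u.i + 0 = u.i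
      simp [twoPow]
    · exact add_zero _
  inv_mul_cancel u := by
    ext
    · change twoPow u.j * -(twoPow (-u.j) * u.i) + u.i = 0
      rw [mul_neg, ← mul_assoc, mul_comm (twoPow u.j), twoPow_neg_mul_self]; ring
    · exact neg_add_cancel _

def A : Frob21 := ⟨0, 1⟩

def X : Frob21 := ⟨1, 0⟩

theorem card_eq : Fintype.card Frob21 = 21 := rfl

variable {G : Type*} [Group G] {a x : G}

def lift (ha : a ^ 3 = 1) (hxa : x * a = a * x ^ 2) : Frob21 →* G where
  toFun u := a ^ u.j.val * x ^ u.i.val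
  map_one' := by
    change a ^ 0 * x ^ 0 = 1
    simp
  map_mul' u v := by
    have hx : x ^ 7 = 1 := pow_seven_eq_one_of_mul_eq ha hxa
    have hj : u.j + v.j = ((u.j.val + v.j.val : ℕ) : ZMod 3) := by simp
    have hi : twoPow v.j * u.i + v.i = ((2 ^ v.j.val * u.i.val + v.i.val : ℕ) : ZMod 7) := by
      simp [twoPow]
    change a ^ (u.j + v.j).val * x ^ (twoPow v.j * u.i + v.i).val = _
    rw [hj, hi, pow_zmod_val ha, pow_zmod_val hx, pow_add, pow_add, mul_assoc,
      ← mul_assoc (a ^ v.j.val), ← pow_mul_pow_eq_of_mul_eq hxa]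
    simp only [mul_assoc]

theorem lift_A (ha : a ^ 3 = 1) (hxa : x * a = a * x ^ 2) : lift ha hxa A = a := by
  change a ^ 1 * x ^ 0 = a
  simp

theorem lift_X (ha : a ^ 3 = 1) (hxa : x * a = a * x ^ 2) : lift ha hxa X = x := by
  change a ^ 0 * x ^ 1 = x
  simp

theorem lift_surjective (ha : a ^ 3 = 1) (hxa : x * a = a * x ^ 2)
    (hgen : Subgroup.closure {a, x} = ⊤) : Function.Surjective (lift ha hxa) := by
  rw [← MonoidHom.range_eq_top, eq_top_iff, ← hgen, Subgroup.closure_le, Set.insert_subset_iff,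
    Set.singleton_subset_iff]
  exact ⟨⟨A, lift_A ha hxa⟩, ⟨X, lift_X ha hxa⟩⟩

noncomputable def liftEquiv [Fintype G] (ha : a ^ 3 = 1) (hxa : x * a = a * x ^ 2)
    (hgen : Subgroup.closure {a, x} = ⊤) (hcard : Fintype.card G = 21) : Frob21 ≃* G :=
  MulEquiv.ofBijective (lift ha hxa) <| (Fintype.bijective_iff_surjective_and_card _).2
    ⟨lift_surjective ha hxa hgen, card_eq.trans hcard.symm⟩

def psi (u : Frob21) : Frob21 := ⟨Equiv.swap 2 4 u.i, ![0, 2, 2, 1, 2, 2, 0] u.i - u.j⟩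

theorem psi_involutive : Function.Involutive psi := by
  unfold Function.Involutive; decide

theorem psi_one : psi 1 = 1 := by decide

theorem preservesColour_A_psi : PreservesColour A psi := by decide

theorem preservesColour_AX_psi : PreservesColour (A * X) psi := by decide

theorem psi_mul_ne : psi (X * X) ≠ psi X * psi X := by decide

end Frob21

/-- The nonabelian group of order 21, `G = ⟨a,x | a³ = e, a⁻¹xa = x²⟩`, is not CCA:
with `b = ax`, some colour-preserving automorphism of `Cay(G; {a^{±1}, b^{±1}})` fixes
the identity but is not a group automorphism. -/
theorem stmt_8 {G : Type*} [Group G] [Fintype G] (hcard : Fintype.card G = 21)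
    (a x : G) (ha : a ^ 3 = 1) (hax : a⁻¹ * x * a = x ^ 2)
    (hgen : Subgroup.closure {a, x} = ⊤) :
    (∃ φ : Equiv.Perm G, ColourPreserving {a, a⁻¹, a * x, (a * x)⁻¹} ⇑φ ∧ φ 1 = 1 ∧
      ¬ ∃ α : G ≃* G, ⇑φ = ⇑α) ∧
    ¬ IsCCA G := by
  have hxa : x * a = a * x ^ 2 := by rw [← hax]; group
  let e := Frob21.liftEquiv ha hxa hgen hcard
  have he_A : e Frob21.A = a := Frob21.lift_A ha hxa
  have he_AX : e (Frob21.A * Frob21.X) = a * x := by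
    rw [map_mul, he_A, show e Frob21.X = x from Frob21.lift_X ha hxa]
  let φ := e.toEquiv.permCongr Frob21.psi_involutive.toPerm
  have hcol : ColourPreserving {a, a⁻¹, a * x, (a * x)⁻¹} φ :=
    colourPreserving_pair (he_A ▸ Frob21.preservesColour_A_psi.permCongr e)
      (he_AX ▸ Frob21.preservesColour_AX_psi.permCongr e)
  have h1 : φ 1 = 1 := by simp [φ, Frob21.psi_one]
  have hnot : ¬ ∃ α : G ≃* G, ⇑φ = ⇑α := fun ⟨α, hα⟩ =>
    Frob21.psi_mul_ne (map_mul_of_permCongr_eq e hα _ _)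
  have hS : Subgroup.closure {a, a⁻¹, a * x, (a * x)⁻¹} = ⊤ :=
    top_unique (hgen ▸ closure_pair_le_closure_mul a x)
  exact ⟨⟨φ, hcol, h1, hnot⟩,
    not_isCCA_of_colourPreserving (inv_pair_eq a (a * x)) hS φ hcol h1 hnot⟩
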